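/- arXiv:2205.05262 — 9 statements merged into one kernel-verified Lean document; each statement's English description precedes it below -/
import Mathlib

section
/- For all k ≥ 1, t_{k+1} ≥ t_k + (1 - a)/2, and consequently t_k ≥ (1 - a)k/2 + (1 + a)/2. -/
theorem stmt0 (a b : ℝ) (ha0 : 0 ≤ a) (ha1 : a < 1) (hb1 : a^2/4 ≤ b) (hb2 : b ≤ 1/4)
    (t : ℕ → ℝ) (ht1 : t 1 = 1)
    (hrec : ∀ k ≥ 1, t (k+1) = Real.sqrt (t k ^ 2 - a * t k + b) + 1/2) :
    ∀ k ≥ 1, t (k+1) ≥ t k + (1 - a)/2 ∧ t k ≥ (1 - a) * k / 2 + (1 + a)/2 := by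
  have key : ∀ k ≥ 1, t k ≥ (1 - a) * k / 2 + (1 + a)/2 := by
    intro k hk
    induction k with
    | zero => omega
    | succ n ih =>
      rcases Nat.eq_or_lt_of_le hk with h | h
      · simp [← h, ht1]; nlinarith
      · have hn : 1 ≤ n := by omega
        have ihn := ih hn
        have htn : t n ≥ 1 := by
          have : ((n : ℝ)) ≥ 1 := by exact_mod_cast hn
          nlinarith
        have hs : Real.sqrt (t n ^ 2 - a * t n + b) ≥ t n - a/2 := by
          rw [ge_iff_le, ← Real.sqrt_sq (by linarith : (0:ℝ) ≤ t n - a/2)]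
          apply Real.sqrt_le_sqrt
          nlinarith
        have := hrec n hn
        push_cast
        nlinarith
  intro k hk
  have hb := key k hk
  have htk : t k ≥ 1 := by
    have : ((k : ℝ)) ≥ 1 := by exact_mod_cast hk
    nlinarith
  have hs : Real.sqrt (t k ^ 2 - a * t k + b) ≥ t k - a/2 := by
    rw [ge_iff_le, show t k - a/2 = t k - a/2 from rfl]
    rw [← Real.sqrt_sq (by linarith : (0:ℝ) ≤ t k - a/2)]
    apply Real.sqrt_le_sqrt
    nlinarith
  have := hrec k hk
  constructor
  · linarith
  · exact hb
end

section
/- For all k ≥ 1, t_{k+1} ≤ t_k + (1 - a + √(4b - a²))/2, and consequently t_k ≤ (1 - a + √(4b - a²))/2 · (k - 1) + 1 ≤ k. -/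
theorem stmt2 (a b : ℝ) (ha0 : 0 ≤ a) (ha1 : a < 1) (hb1 : a^2/4 ≤ b) (hb2 : b ≤ 1/4)
    (t : ℕ → ℝ) (ht1 : t 1 = 1)
    (hrec : ∀ k ≥ 1, t (k+1) = Real.sqrt (t k ^ 2 - a * t k + b) + 1/2) :
    ∀ k ≥ 1, t (k+1) ≤ t k + (1 - a + Real.sqrt (4*b - a^2))/2 ∧
      t k ≤ (1 - a + Real.sqrt (4*b - a^2))/2 * (k - 1) + 1 ∧
      (1 - a + Real.sqrt (4*b - a^2))/2 * (k - 1) + 1 ≤ k := by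
  have hbnn : 0 ≤ 4*b - a^2 := by nlinarith
  set s := Real.sqrt (4*b - a^2) with hs
  have hs0 : 0 ≤ s := Real.sqrt_nonneg _
  have hs1 : s ≤ 1 + a := by
    rw [hs]
    have h1 : 4*b - a^2 ≤ (1+a)^2 := by nlinarith
    calc Real.sqrt (4*b-a^2) ≤ Real.sqrt ((1+a)^2) := Real.sqrt_le_sqrt h1
      _ = 1 + a := Real.sqrt_sq (by linarith)
  set c := (1 - a + s)/2 with hc
  have hc0 : 0 ≤ c := by rw [hc]; linarith
  have hc1 : c ≤ 1 := by rw [hc]; linarith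
  have hlow : ∀ k, 1 ≤ k → 1/2 ≤ t k := by
    intro k
    induction k with
    | zero => omega
    | succ n ih =>
      intro _
      rcases Nat.eq_zero_or_pos n with h | h
      · subst h; rw [ht1]; norm_num
      · rw [hrec n h]
        have := Real.sqrt_nonneg (t n ^ 2 - a * t n + b)
        linarith
  have hstep : ∀ k, 1 ≤ k → t (k+1) ≤ t k + c := by
    intro k hk
    rw [hrec k hk]
    have htk := hlow k hk
    have hx : 0 ≤ t k - a/2 := by linarith
    have hy : 0 ≤ b - a^2/4 := by linarith
    have key : Real.sqrt (t k ^ 2 - a * t k + b) ≤ (t k - a/2) + Real.sqrt (b - a^2/4) := by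
      have hsq : Real.sqrt (b - a^2/4) ^ 2 = b - a^2/4 := Real.sq_sqrt hy
      have h1 : t k ^ 2 - a * t k + b ≤ ((t k - a/2) + Real.sqrt (b - a^2/4))^2 := by
        nlinarith [Real.sqrt_nonneg (b - a^2/4),
          mul_nonneg hx (Real.sqrt_nonneg (b - a^2/4))]
      calc Real.sqrt (t k ^ 2 - a * t k + b)
          ≤ Real.sqrt (((t k - a/2) + Real.sqrt (b - a^2/4))^2) := Real.sqrt_le_sqrt h1
        _ = _ := Real.sqrt_sq (by positivity)
    have hhalf : Real.sqrt (b - a^2/4) = s/2 := by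
      rw [hs, show (4*b - a^2 : ℝ) = 2^2 * (b - a^2/4) by ring,
        Real.sqrt_mul (by positivity), Real.sqrt_sq (by norm_num)]
      ring
    rw [hhalf] at key
    rw [hc] at *
    linarith
  have hlin : ∀ k, 1 ≤ k → t k ≤ c * (k - 1) + 1 := by
    intro k
    induction k with
    | zero => omega
    | succ n ih =>
      intro _
      rcases Nat.eq_zero_or_pos n with h | h
      · subst h; rw [ht1]; norm_num
      · have h1 := hstep n h
        have h2 := ih h
        push_cast
        push_cast at h2
        nlinarith [h1, h2]
  intro k hk
  refine ⟨hstep k hk, hlin k hk, ?_⟩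
  have hk1 : (1:ℝ) ≤ (k:ℝ) := by exact_mod_cast hk
  nlinarith [hk1, hc0, hc1]
end

section
/- For all k ≥ 1, defining γ_k = (t_k - 1)/t_{k+1}, we have 0 ≤ γ_k ≤ (k - 1)/(k + 1/2). -/
theorem stmt5 (a b : ℝ) (ha0 : 0 ≤ a) (ha1 : a < 1) (hb1 : a^2/4 ≤ b) (hb2 : b ≤ 1/4)
    (t : ℕ → ℝ) (ht1 : t 1 = 1)
    (hrec : ∀ k ≥ 1, t (k+1) = Real.sqrt (t k ^ 2 - a * t k + b) + 1/2) :
    ∀ k ≥ 1, 0 ≤ (t k - 1) / t (k+1) ∧ (t k - 1) / t (k+1) ≤ ((k : ℝ) - 1) / (k + 1/2) := by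
  have key : ∀ k, 1 ≤ k → 1 ≤ t k ∧ t k ≤ (2*(k:ℝ)+1)/3 := by
    intro k hk
    induction k, hk using Nat.le_induction with
    | base => rw [ht1]; norm_num
    | succ n hn ih =>
      obtain ⟨h1, h2⟩ := ih
      have hn1 : (1:ℝ) ≤ n := by exact_mod_cast hn
      have hs1 : t n - a/2 ≤ Real.sqrt (t n ^ 2 - a * t n + b) := by
        have := Real.sqrt_le_sqrt (show (t n - a/2)^2 ≤ t n ^ 2 - a * t n + b by nlinarith)
        rwa [Real.sqrt_sq (by linarith)] at this
      have hs2 : Real.sqrt (t n ^ 2 - a * t n + b) ≤ (4*(n:ℝ)+3)/6 := by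
        rw [show (4*(n:ℝ)+3)/6 = Real.sqrt (((4*(n:ℝ)+3)/6)^2) from
          (Real.sqrt_sq (by positivity)).symm]
        apply Real.sqrt_le_sqrt
        nlinarith [mul_nonneg ha0 (by linarith : (0:ℝ) ≤ t n)]
      rw [hrec n hn]
      constructor
      · nlinarith
      · push_cast; nlinarith
  intro k hk
  obtain ⟨h1, h2⟩ := key k hk
  obtain ⟨h1', h2'⟩ := key (k+1) (by omega)
  have hk1 : (1:ℝ) ≤ k := by exact_mod_cast hk
  have hs1 : t k - a/2 ≤ Real.sqrt (t k ^ 2 - a * t k + b) := by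
    have := Real.sqrt_le_sqrt (show (t k - a/2)^2 ≤ t k ^ 2 - a * t k + b by nlinarith)
    rwa [Real.sqrt_sq (by linarith)] at this
  have hmono : t k ≤ t (k+1) := by rw [hrec k hk]; linarith
  constructor
  · apply div_nonneg <;> linarith
  · rw [div_le_div_iff₀ (by linarith) (by linarith)]
    nlinarith [mul_le_mul_of_nonneg_left hmono (by linarith : (0:ℝ) ≤ (k:ℝ) - 1)]
end

section
/- For all k ≥ 1, defining γ_k = (t_k - 1)/t_{k+1}, we have 1 - γ_k² ≥ 1/t_k. -/
theorem stmt6 (a b : ℝ) (ha0 : 0 ≤ a) (ha1 : a < 1) (hb1 : a^2/4 ≤ b) (hb2 : b ≤ 1/4)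
    (t : ℕ → ℝ) (ht1 : t 1 = 1)
    (hrec : ∀ k ≥ 1, t (k+1) = Real.sqrt (t k ^ 2 - a * t k + b) + 1/2) :
    ∀ k ≥ 1, 1 - ((t k - 1) / t (k+1))^2 ≥ 1 / t k := by
  -- inner expression nonneg
  have hs : ∀ x : ℝ, 1 ≤ x → (1:ℝ)/4 ≤ x ^ 2 - a * x + b := by
    intro x hx
    nlinarith [sq_nonneg (x - a/2), sq_nonneg (2 - a), sq_nonneg (x - 1)]
  have hge : ∀ k, 1 ≤ k → 1 ≤ t k := by
    intro k hk
    induction k with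
    | zero => omega
    | succ n ih =>
      rcases Nat.lt_or_ge n 1 with h | h
      · interval_cases n
        · simp [ht1]
      · have hn := ih h
        rw [hrec n h]
        have h4 : (1:ℝ)/4 ≤ t n ^ 2 - a * t n + b := hs _ hn
        have h12 : (1:ℝ)/2 ≤ Real.sqrt (t n ^ 2 - a * t n + b) := by
          have : Real.sqrt (1/4) = 1/2 := by
            rw [show (1:ℝ)/4 = (1/2)^2 by norm_num, Real.sqrt_sq (by norm_num)]
          linarith [Real.sqrt_le_sqrt h4, this ▸ Real.sqrt_le_sqrt h4]
        linarith
  intro k hk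
  have h1 : 1 ≤ t k := hge k hk
  have h2 : 1 ≤ t (k+1) := hge (k+1) (by omega)
  have hsnn : 0 ≤ t k ^ 2 - a * t k + b := by linarith [hs (t k) h1]
  have hsqnn : 0 ≤ Real.sqrt (t k ^ 2 - a * t k + b) := Real.sqrt_nonneg _
  have hsq : Real.sqrt (t k ^ 2 - a * t k + b) ^ 2 = t k ^ 2 - a * t k + b :=
    Real.sq_sqrt hsnn
  have hkey : t k * (t k - 1) ≤ t (k+1) ^ 2 := by
    rw [hrec k hk]
    nlinarith [mul_nonneg (sub_nonneg.mpr ha1.le) (by linarith : (0:ℝ) ≤ t k),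
      (by nlinarith : (0:ℝ) ≤ b)]
  have htk : (0:ℝ) < t k := by linarith
  have htk2 : (0:ℝ) < t (k+1) := by linarith
  rw [ge_iff_le, ← sub_nonneg]
  have heq : 1 - ((t k - 1) / t (k+1))^2 - 1 / t k
      = (t k - 1) * (t (k+1) ^ 2 - t k * (t k - 1)) / (t k * t (k+1) ^ 2) := by
    field_simp
    ring
  rw [heq]
  apply div_nonneg
  · exact mul_nonneg (by linarith) (by linarith)
  · positivity
end

section
/- If b = a²/4, then the sequence (t_k) has the closed form t_k = (1 - a)k/2 + (1 + a)/2 for all k ≥ 1. -/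
theorem stmt9 (a : ℝ) (ha0 : 0 ≤ a) (ha1 : a < 1)
    (t : ℕ → ℝ) (ht1 : t 1 = 1)
    (hrec : ∀ k ≥ 1, t (k+1) = Real.sqrt (t k ^ 2 - a * t k + a^2/4) + 1/2) :
    ∀ k ≥ 1, t k = (1 - a) * k / 2 + (1 + a) / 2 := by
  intro k hk
  induction k, hk using Nat.le_induction with
  | base => simp [ht1]; ring
  | succ n hn ih =>
    have hnn : (1 : ℝ) ≤ n := by exact_mod_cast hn
    have hpos : t n - a / 2 ≥ 0 := by
      rw [ih]; nlinarith
    have hsq : t n ^ 2 - a * t n + a ^ 2 / 4 = (t n - a / 2) ^ 2 := by ring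
    rw [hrec n hn, hsq, Real.sqrt_sq hpos, ih]
    push_cast
    ring
end

section
/- For all k ≥ 0, (1/(1-a))·[t_{k+1}² - a·t_{k+1} + (1/4 - b)·k] ≥ Q₁(k), where Q₁(α) = ((1-a)/4)·α² + [1 - a/2 + (1 - 4b)/(4(1-a))]·α + 1. -/
theorem stmt14 (a b : ℝ) (ha0 : 0 ≤ a) (ha1 : a < 1) (hb1 : a^2/4 ≤ b) (hb2 : b ≤ 1/4)
    (t : ℕ → ℝ) (ht1 : t 1 = 1)
    (hrec : ∀ k ≥ 1, t (k+1) = Real.sqrt (t k ^ 2 - a * t k + b) + 1/2) :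
    ∀ k : ℕ, (1 / (1 - a)) * (t (k+1) ^ 2 - a * t (k+1) + (1/4 - b) * k) ≥
      ((1 - a)/4) * (k : ℝ)^2 + (1 - a/2 + (1 - 4*b)/(4*(1 - a))) * k + 1 := by
  have h1a : (0:ℝ) < 1 - a := by linarith
  have hrad : ∀ k : ℕ, 0 ≤ t k ^ 2 - a * t k + b := by
    intro k
    nlinarith [sq_nonneg (t k - a/2)]
  have hlb : ∀ k : ℕ, t (k+1) ≥ (1-a)*k/2 + 1 := by
    intro k
    induction k with
    | zero => simp [ht1]
    | succ n ih =>
      have hr := hrec (n+1) (by omega)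
      have hs : Real.sqrt (t (n+1)^2 - a*t (n+1) + b) ≥ t (n+1) - a/2 := by
        have h2 : (t (n+1) - a/2)^2 ≤ t (n+1)^2 - a*t (n+1) + b := by nlinarith
        have h0 : 0 ≤ t (n+1) - a/2 := by
          have hn : (0:ℝ) ≤ (1-a)*n/2 := by positivity
          linarith
        calc t (n+1) - a/2 = Real.sqrt ((t (n+1) - a/2)^2) := (Real.sqrt_sq h0).symm
          _ ≤ _ := Real.sqrt_le_sqrt h2
      push_cast
      rw [hr]
      push_cast at ih
      nlinarith
  have key : ∀ k : ℕ, t (k+1)^2 - a*t (k+1) ≥ (1-a)^2/4*(k:ℝ)^2 + (1-a)*(1-a/2)*k + (1-a) := by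
    intro k
    induction k with
    | zero => simp [ht1]
    | succ n ih =>
      have hr := hrec (n+1) (by omega)
      have hrd := hrad (n+1)
      have hsq : (t (n+1+1) - 1/2)^2 = t (n+1)^2 - a*t (n+1) + b := by
        rw [hr]
        have := Real.sq_sqrt hrd
        ring_nf
        ring_nf at this
        linarith
      have hl := hlb (n+1)
      push_cast at hl ih ⊢
      nlinarith [hsq, hl, ih]
  intro k
  have hk := key k
  have hq : (1 - 4*b)/(4*(1-a)) * (1-a) = (1-4*b)/4 := by
    field_simp
  rw [ge_iff_le, one_div_mul_eq_div, le_div_iff₀ h1a]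
  nlinarith [hk, hq, sq_nonneg (k:ℝ)]
end

section
/- For all k ≥ 0, (1/(1-a))·[a·(t_{k+1}² - t_{k+1}) + (1/4 - b)·k] ≥ Q₂(k), where Q₂(α) = (a(1-a)/4)·α² + [a/2 + (1 - 4b)/(4(1-a))]·α. -/
theorem stmt15 (a b : ℝ) (ha0 : 0 ≤ a) (ha1 : a < 1) (hb1 : a^2/4 ≤ b) (hb2 : b ≤ 1/4)
    (t : ℕ → ℝ) (ht1 : t 1 = 1)
    (hrec : ∀ k ≥ 1, t (k+1) = Real.sqrt (t k ^ 2 - a * t k + b) + 1/2) :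
    ∀ k : ℕ, (1 / (1 - a)) * (a * (t (k+1) ^ 2 - t (k+1)) + (1/4 - b) * k) ≥
      (a * (1 - a)/4) * (k : ℝ)^2 + (a/2 + (1 - 4*b)/(4*(1 - a))) * k := by
  have h1a : (0:ℝ) < 1 - a := by linarith
  -- lower bound on t (k+1)
  have hlb : ∀ k : ℕ, t (k+1) ≥ (1 - a) * k / 2 + 1 := by
    intro k
    induction k with
    | zero => simp [ht1]
    | succ n ih =>
      have hn1 : t (n+1) ≥ 1 := by
        have : (0:ℝ) ≤ (1-a) * n / 2 := by positivity
        linarith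
      have hrec' := hrec (n+1) (by omega)
      have hsq : t (n+1) ^ 2 - a * t (n+1) + b ≥ (t (n+1) - a/2)^2 := by nlinarith
      have hpos : (0:ℝ) ≤ t (n+1) - a/2 := by linarith
      have hs : Real.sqrt (t (n+1) ^ 2 - a * t (n+1) + b) ≥ t (n+1) - a/2 := by
        calc Real.sqrt (t (n+1) ^ 2 - a * t (n+1) + b)
            ≥ Real.sqrt ((t (n+1) - a/2)^2) := Real.sqrt_le_sqrt hsq
          _ = t (n+1) - a/2 := Real.sqrt_sq hpos
      push_cast
      rw [hrec']
      have : t (n+1) - a/2 ≥ (1 - a) * n / 2 + 1 - a/2 := by linarith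
      nlinarith
  intro k
  have hk := hlb k
  set s := t (k+1)
  have hc1 : ((1 - a) * k / 2 + 1 : ℝ) ≥ 1 := by
    have : (0:ℝ) ≤ (1 - a) * k / 2 := by positivity
    linarith
  have hs1 : s ≥ 1 := le_trans hc1 hk
  have hmono : s^2 - s ≥ ((1 - a) * k / 2 + 1)^2 - ((1 - a) * k / 2 + 1) := by nlinarith
  rw [ge_iff_le, one_div, ← div_eq_inv_mul, le_div_iff₀ h1a]
  have hE : (1 - 4*b)/(4*(1 - a)) * (1 - a) = (1 - 4*b)/4 := by
    field_simp
  nlinarith [mul_nonneg ha0 (sub_nonneg.mpr hmono)]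
end

section
/- For all p ≥ 1, (1/(1-a))·[a²·(t_p - 1) + (1/4 - b)·(p - t_p + a(t_p - 1))/t_p] ≥ a²·(t_p - 1)/2. -/
theorem stmt16 (a b : ℝ) (ha0 : 0 ≤ a) (ha1 : a < 1) (hb1 : a^2/4 ≤ b) (hb2 : b ≤ 1/4)
    (t : ℕ → ℝ) (ht1 : t 1 = 1)
    (hrec : ∀ k ≥ 1, t (k+1) = Real.sqrt (t k ^ 2 - a * t k + b) + 1/2) :
    ∀ p ≥ 1, (1 / (1 - a)) *
        (a^2 * (t p - 1) + (1/4 - b) * ((p : ℝ) - t p + a * (t p - 1)) / t p) ≥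
      a^2 * (t p - 1) / 2 := by
  have key : ∀ p ≥ 1, 1 ≤ t p ∧ t p ≤ (p : ℝ) := by
    intro p hp
    induction p, hp using Nat.le_induction with
    | base => simp [ht1]
    | succ k hk ih =>
      obtain ⟨h1, h2⟩ := ih
      have hrk := hrec k hk
      have hnn : 0 ≤ t k ^ 2 - a * t k + b := by nlinarith
      constructor
      · have hlb : t k - 1/2 ≤ Real.sqrt (t k ^ 2 - a * t k + b) := by
          rw [show t k - 1/2 = Real.sqrt ((t k - 1/2)^2) by
            rw [Real.sqrt_sq (by linarith)]]
          apply Real.sqrt_le_sqrt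
          nlinarith
        rw [hrk]; linarith
      · have hub : Real.sqrt (t k ^ 2 - a * t k + b) ≤ t k + 1/2 := by
          rw [show t k + 1/2 = Real.sqrt ((t k + 1/2)^2) by
            rw [Real.sqrt_sq (by linarith)]]
          apply Real.sqrt_le_sqrt
          nlinarith
        rw [hrk]
        push_cast
        linarith
  intro p hp
  obtain ⟨h1, h2⟩ := key p hp
  have ht0 : (0:ℝ) < t p := by linarith
  have ha' : (0:ℝ) < 1 - a := by linarith
  have hfrac : 0 ≤ (1/4 - b) * ((p : ℝ) - t p + a * (t p - 1)) / t p := by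
    apply div_nonneg _ (le_of_lt ht0)
    apply mul_nonneg (by linarith)
    nlinarith
  have hbr : a^2 * (t p - 1) ≤
      a^2 * (t p - 1) + (1/4 - b) * ((p : ℝ) - t p + a * (t p - 1)) / t p := by
    linarith
  have hone : 1 ≤ 1 / (1 - a) := by
    rw [le_div_iff₀ ha']; linarith
  have h0 : 0 ≤ a^2 * (t p - 1) := by nlinarith
  calc a^2 * (t p - 1) / 2 ≤ a^2 * (t p - 1) := by linarith
    _ ≤ 1 * (a^2 * (t p - 1) + (1/4 - b) * ((p : ℝ) - t p + a * (t p - 1)) / t p) := by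
        linarith
    _ ≤ (1 / (1 - a)) * (a^2 * (t p - 1) + (1/4 - b) * ((p : ℝ) - t p + a * (t p - 1)) / t p) := by
        apply mul_le_mul_of_nonneg_right hone (by linarith)
end

section
/- For all k ≥ 1, the sequence (t_k) is strictly increasing: t_{k+1} > t_k, and t_k ≥ 1. -/
theorem stmt18 (a b : ℝ) (ha0 : 0 ≤ a) (ha1 : a < 1) (hb1 : a^2/4 ≤ b) (hb2 : b ≤ 1/4)
    (t : ℕ → ℝ) (ht1 : t 1 = 1)
    (hrec : ∀ k ≥ 1, t (k+1) = Real.sqrt (t k ^ 2 - a * t k + b) + 1/2) :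
    ∀ k ≥ 1, t (k+1) > t k ∧ t k ≥ 1 := by
  have key : ∀ x : ℝ, 1 ≤ x → Real.sqrt (x ^ 2 - a * x + b) + 1/2 > x := by
    intro x hx
    have h1 : (x - 1/2)^2 < x ^ 2 - a * x + b := by nlinarith
    have hv : 0 ≤ x ^ 2 - a * x + b := by nlinarith [sq_nonneg (x - a/2)]
    have hs := Real.sq_sqrt hv
    have hsn := Real.sqrt_nonneg (x ^ 2 - a * x + b)
    nlinarith [sq_nonneg (Real.sqrt (x ^ 2 - a * x + b) - (x - 1/2))]
  have main : ∀ k, 1 ≤ k → t k ≥ 1 := by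
    intro k hk
    induction k with
    | zero => omega
    | succ n ih =>
      rcases Nat.lt_or_ge 1 (n+1) with h|h
      · have hn : 1 ≤ n := by omega
        have htn := ih hn
        rw [hrec n hn]
        have := key (t n) htn
        linarith
      · have : n = 0 := by omega
        subst this
        simp [ht1]
  intro k hk
  exact ⟨by rw [hrec k hk]; exact key (t k) (main k hk), main k hk⟩
end
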